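/- arXiv:1312.4024 — 13 statements merged into one kernel-verified Lean document; each statement's English description precedes it below -/
import Mathlib

section
/- If R is a ring in which every nilpotent element is central and for every a ∈ R the right annihilator of a is generated by an idempotent, then R is reduced. -/
/-- A ring is central reduced if every nilpotent element is central. -/
def IsCentralReduced (R : Type*) [Ring R] : Prop :=
  ∀ a : R, IsNilpotent a → a ∈ Set.center R

theorem eq_zero_of_sq_eq_zero_of_commute_of_rightAnnihilator_eq {M : Type*} [MonoidWithZero M]
    {b e : M} (hb : b ^ 2 = 0) (he : IsIdempotentElem e) (hbe : Commute b e)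
    (hann : {x : M | b * x = 0} = {y : M | ∃ r : M, y = e * r}) : b = 0 := by
  have hb_mem : b ∈ {x : M | b * x = 0} := by rwa [sq] at hb
  have he_mem : e ∈ {x : M | b * x = 0} := hann ▸ ⟨1, (mul_one e).symm⟩
  rw [hann] at hb_mem
  obtain ⟨r, rfl⟩ := hb_mem
  calc e * r = e * (e * r) := by rw [← mul_assoc, he.eq]
    _ = e * r * e := hbe.eq.symm
    _ = 0 := he_mem

theorem stmt_1 (R : Type*) [Ring R]
    (hpp : ∀ a : R, ∃ e : R, IsIdempotentElem e ∧
      {x : R | a * x = 0} = {y : R | ∃ r : R, y = e * r})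
    (hcr : IsCentralReduced R) :
    ∀ a : R, IsNilpotent a → a = 0 := by
  have : IsReduced R := (isReduced_iff_pow_one_lt 2 one_lt_two).2 fun b hb ↦ by
    obtain ⟨e, he, hann⟩ := hpp b
    have hcomm : Commute b e := (hcr b ⟨2, hb⟩).comm e
    exact eq_zero_of_sq_eq_zero_of_commute_of_rightAnnihilator_eq hb he hcomm hann
  exact fun a ha ↦ ha.eq_zero
end

section
/- Let R be a central reduced ring and I a nil ideal of R. Then R/I is central reduced. -/
theorem Set.apply_mem_center_of_surjective {F M N : Type*} [Semigroup M] [Semigroup N]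
    [FunLike F M N] [MulHomClass F M N] (f : F) (hf : Function.Surjective f) {a : M}
    (ha : a ∈ Set.center M) : f a ∈ Set.center N := by
  rw [Semigroup.mem_center_iff] at ha ⊢
  intro y
  obtain ⟨b, rfl⟩ := hf y
  rw [← map_mul, ha b, map_mul]

theorem IsNilpotent.of_map_of_ker_nil {F R S : Type*} [MonoidWithZero R] [MonoidWithZero S]
    [FunLike F R S] [MonoidWithZeroHomClass F R S] (f : F)
    (hker : ∀ a, f a = 0 → IsNilpotent a) {a : R} (ha : IsNilpotent (f a)) : IsNilpotent a := by
  obtain ⟨n, hn⟩ := ha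
  exact (hker (a ^ n) (by rw [map_pow, hn])).of_pow

theorem IsCentralReduced.of_surjective_of_ker_nil {F R S : Type*} [Ring R] [Ring S]
    [FunLike F R S] [RingHomClass F R S] (hR : IsCentralReduced R) (f : F)
    (hf : Function.Surjective f) (hker : ∀ a, f a = 0 → IsNilpotent a) :
    IsCentralReduced S := by
  intro y hy
  obtain ⟨a, rfl⟩ := hf y
  exact Set.apply_mem_center_of_surjective f hf (hR a (.of_map_of_ker_nil f hker hy))

theorem stmt_2 (R : Type*) [Ring R] (hcr : IsCentralReduced R)
    (I : TwoSidedIdeal R) (hnil : ∀ a ∈ I, IsNilpotent a) :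
    IsCentralReduced I.ringCon.Quotient := by
  refine hcr.of_surjective_of_ker_nil I.ringCon.mk' I.ringCon.mk'_surjective fun a ha => hnil a ?_
  rwa [← TwoSidedIdeal.ker_ringCon_mk' I, TwoSidedIdeal.mem_ker]
end

section
/- A ring R is a domain if and only if R is a prime ring in which every nilpotent element is central. -/
section

variable {M₀ : Type*} [MonoidWithZero M₀] [IsReduced M₀]

theorem IsReduced.mul_eq_zero_symm {a b : M₀} (h : a * b = 0) : b * a = 0 :=
  eq_zero_of_pow_eq_zero (n := 2) <| by
    rw [sq, mul_assoc, ← mul_assoc a, h, zero_mul, mul_zero]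

theorem IsReduced.mul_mul_eq_zero {a b : M₀} (h : a * b = 0) (r : M₀) : a * r * b = 0 :=
  eq_zero_of_pow_eq_zero (n := 2) <| by
    calc (a * r * b) ^ 2 = a * r * (b * a) * (r * b) := by simp only [sq, mul_assoc]
      _ = 0 := by rw [IsReduced.mul_eq_zero_symm h, mul_zero, zero_mul]

end

section

variable {R : Type*} [Ring R]

theorem IsCentralReduced.of_isReduced [IsReduced R] : IsCentralReduced R :=
  fun _ ha ↦ ha.eq_zero ▸ Set.zero_mem_center

theorem IsCentralReduced.isReduced (hR : IsCentralReduced R)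
    (hsemiprime : ∀ a : R, (∀ r : R, a * r * a = 0) → a = 0) : IsReduced R := by
  refine (isReduced_iff_pow_one_lt 2 one_lt_two).2 fun x hx ↦ hsemiprime x fun r ↦ ?_
  have hxr : x * r = r * x := ((hR x ⟨2, hx⟩).comm r).eq
  rw [hxr, mul_assoc, ← sq, hx, mul_zero]

theorem noZeroDivisors_of_isReduced_of_prime [IsReduced R]
    (hprime : ∀ a b : R, (∀ r : R, a * r * b = 0) → a = 0 ∨ b = 0) : NoZeroDivisors R :=
  ⟨fun hab ↦ hprime _ _ (IsReduced.mul_mul_eq_zero hab)⟩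

end

theorem stmt_3 (R : Type*) [Ring R] :
    IsDomain R ↔
      (Nontrivial R ∧ (∀ a b : R, (∀ r : R, a * r * b = 0) → a = 0 ∨ b = 0) ∧
        IsCentralReduced R) := by
  constructor
  · intro _
    exact ⟨inferInstance, fun a b hab ↦ mul_eq_zero.mp (by simpa using hab 1),
      IsCentralReduced.of_isReduced⟩
  · rintro ⟨_, hprime, hR⟩
    have : IsReduced R := hR.isReduced fun a ha ↦ (hprime a a ha).elim id id
    have : NoZeroDivisors R := noZeroDivisors_of_isReduced_of_prime hprime
    exact NoZeroDivisors.to_isDomain R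
end

section
/- If R is central reduced, then R is central semicommutative: for all a, b ∈ R with ab = 0 and all r ∈ R, the element arb is central in R. -/
/-! If `ab = 0`, then `(ba)² = b(ab)a = 0`, so `ba` is nilpotent and hence central. Centrality of
`ba` gives `(arb)² = ar(ba)rb = arr(ba)b = arrb(ab) = 0`, so `arb` is nilpotent and hence central. -/

section MonoidWithZero

variable {M : Type*} [MonoidWithZero M] {a b : M}

theorem sq_mul_swap_eq_zero_of_mul_eq_zero (hab : a * b = 0) : (b * a) ^ 2 = 0 := by
  rw [sq, mul_assoc, ← mul_assoc a, hab, zero_mul, mul_zero]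

theorem sq_mul_mul_eq_zero_of_mul_eq_zero_of_mem_center (hab : a * b = 0)
    (hba : b * a ∈ Set.center M) (r : M) : (a * r * b) ^ 2 = 0 :=
  calc (a * r * b) ^ 2 = a * r * (b * a * r) * b := by simp only [sq, mul_assoc]
    _ = a * r * (r * (b * a)) * b := by rw [((Set.mem_center_iff.mp hba).comm r).eq]
    _ = a * r * r * b * (a * b) := by simp only [mul_assoc]
    _ = 0 := by rw [hab, mul_zero]

end MonoidWithZero

theorem stmt_4 (R : Type*) [Ring R] (hcr : IsCentralReduced R) :
    ∀ a b : R, a * b = 0 → ∀ r : R, a * r * b ∈ Set.center R := by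
  intro a b hab r
  have hba : b * a ∈ Set.center R := hcr _ ⟨2, sq_mul_swap_eq_zero_of_mul_eq_zero hab⟩
  exact hcr _ ⟨2, sq_mul_mul_eq_zero_of_mul_eq_zero_of_mem_center hab hba r⟩
end

section
/- Let R be a prime central semicommutative ring. Then R is reduced. -/
/-!
If `a * a = 0`, central semicommutativity makes every `a * r * a` central, and it squares to zero
since `a * a = 0` occurs inside. A central `c` with `c * c = 0` satisfies `c * s * c = s * (c * c) = 0`,
so primeness (applied with `a = b`) forces `a * r * a = 0` for all `r`, and then `a = 0`.
A ring without nonzero square-zero elements is reduced.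
-/

section

variable {R : Type*} [Ring R]

theorem eq_zero_of_mem_center_of_mul_self_eq_zero
    (hsemiprime : ∀ a : R, (∀ r : R, a * r * a = 0) → a = 0)
    {c : R} (hc : c ∈ Set.center R) (hcc : c * c = 0) : c = 0 :=
  hsemiprime c fun s => by
    rw [(Set.mem_center_iff.mp hc).comm s, mul_assoc, hcc, mul_zero]

theorem eq_zero_of_mul_self_eq_zero_of_centralSemicommutative
    (hsemiprime : ∀ a : R, (∀ r : R, a * r * a = 0) → a = 0)
    (hcsc : ∀ a b : R, a * b = 0 → ∀ r : R, a * r * b ∈ Set.center R)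
    {a : R} (ha : a * a = 0) : a = 0 :=
  hsemiprime a fun r =>
    eq_zero_of_mem_center_of_mul_self_eq_zero hsemiprime (hcsc a a ha r) <| by
      simp only [mul_assoc, ← mul_assoc a a, ha, zero_mul, mul_zero]

theorem isReduced_of_semiprime_of_centralSemicommutative
    (hsemiprime : ∀ a : R, (∀ r : R, a * r * a = 0) → a = 0)
    (hcsc : ∀ a b : R, a * b = 0 → ∀ r : R, a * r * b ∈ Set.center R) : IsReduced R :=
  (isReduced_iff_pow_one_lt 2 one_lt_two).2 fun _ ha =>
    eq_zero_of_mul_self_eq_zero_of_centralSemicommutative hsemiprime hcsc (by rwa [← sq])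

end

theorem stmt_5 (R : Type*) [Ring R]
    (hprime : ∀ a b : R, (∀ r : R, a * r * b = 0) → a = 0 ∨ b = 0)
    (hcsc : ∀ a b : R, a * b = 0 → ∀ r : R, a * r * b ∈ Set.center R) :
    ∀ a : R, IsNilpotent a → a = 0 := by
  have hsemiprime (a : R) (h : ∀ r : R, a * r * a = 0) : a = 0 := (hprime a a h).elim id id
  have := isReduced_of_semiprime_of_centralSemicommutative hsemiprime hcsc
  exact fun a ha => ha.eq_zero
end

section
/- Every central reduced ring is 2-primal: the set of nilpotent elements equals the prime radical. -/
/-- A two-sided ideal `P` of a ring is prime if whenever `a R b ⊆ P`, then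
`a ∈ P` or `b ∈ P`. -/
def TwoSidedIdeal.IsPrimeIdeal {R : Type*} [Ring R] (P : TwoSidedIdeal R) : Prop :=
  (P : Set R) ≠ Set.univ ∧ ∀ a b : R, (∀ r : R, a * r * b ∈ P) → a ∈ P ∨ b ∈ P

/-- The prime radical of a ring: the intersection of all prime two-sided ideals. -/
def primeRadical (R : Type*) [Ring R] : Set R :=
  {x : R | ∀ P : TwoSidedIdeal R, P.IsPrimeIdeal → x ∈ P}

namespace TwoSidedIdeal

variable {R : Type*} [Ring R]

theorem IsPrimeIdeal.mem_of_pow_mem {P : TwoSidedIdeal R} (hP : P.IsPrimeIdeal) {x : R}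
    (hx : x ∈ Set.center R) {n : ℕ} (h : x ^ n ∈ P) : x ∈ P := by
  induction n with
  | zero => simpa using P.mul_mem_left x 1 (by simpa using h)
  | succ n ih =>
    have hxRxn : ∀ r, x * r * x ^ n ∈ P := fun r => by
      rw [(Set.mem_center_iff.mp hx).comm r, mul_assoc, ← pow_succ']
      exact P.mul_mem_left r _ h
    exact (hP.2 x (x ^ n) hxRxn).elim id ih

theorem exists_coe_eq_biUnion_of_isChain {c : Set (TwoSidedIdeal R)}
    (hc : IsChain (· ≤ ·) c) (hne : c.Nonempty) :
    ∃ J : TwoSidedIdeal R, (J : Set R) = ⋃ I ∈ c, (I : Set R) := by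
  obtain ⟨I₀, hI₀⟩ := hne
  refine ⟨mk' (⋃ I ∈ c, (I : Set R)) ?_ ?_ ?_ ?_ ?_, coe_mk' ..⟩ <;>
    simp only [Set.mem_iUnion₂, SetLike.mem_coe]
  · exact ⟨I₀, hI₀, I₀.zero_mem⟩
  · rintro x y ⟨I, hI, hx⟩ ⟨J, hJ, hy⟩
    obtain ⟨K, hK, hIK, hJK⟩ := hc.directedOn I hI J hJ
    exact ⟨K, hK, K.add_mem (hIK hx) (hJK hy)⟩
  · rintro x ⟨I, hI, hx⟩
    exact ⟨I, hI, I.neg_mem hx⟩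
  · rintro x y ⟨I, hI, hy⟩
    exact ⟨I, hI, I.mul_mem_left x y hy⟩
  · rintro x y ⟨I, hI, hx⟩
    exact ⟨I, hI, I.mul_mem_right x y hx⟩

theorem exists_le_maximal_disjoint (S : Set R) {I : TwoSidedIdeal R} (hI : Disjoint S I) :
    ∃ M, I ≤ M ∧ Maximal (fun J : TwoSidedIdeal R => Disjoint S J) M := by
  refine zorn_le_nonempty₀ {J : TwoSidedIdeal R | Disjoint S (J : Set R)}
    (fun c hcS hc J hJ => ?_) I hI
  obtain ⟨U, hU⟩ := exists_coe_eq_biUnion_of_isChain hc ⟨J, hJ⟩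
  refine ⟨U, ?_, fun K hK x hx => ?_⟩
  · show Disjoint S (U : Set R)
    rw [hU, Set.disjoint_iUnion₂_right]
    exact fun K hK => hcS hK
  · rw [← SetLike.mem_coe, hU]
    exact Set.mem_biUnion hK hx

theorem mul_mem_of_mem_span_singleton {P : TwoSidedIdeal R} {a b : R}
    (hab : ∀ r, a * r * b ∈ P) {s t : R} (hs : s ∈ span {a}) (ht : t ∈ span {b}) :
    s * t ∈ P := by
  have haRt : ∀ t ∈ span {b}, ∀ r, a * r * t ∈ P := fun t ht => by
    induction ht using span_induction with
    | mem _ h => rw [Set.mem_singleton_iff.mp h]; exact hab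
    | zero => simp [P.zero_mem]
    | add _ _ _ _ hx hy => intro r; rw [mul_add]; exact P.add_mem (hx r) (hy r)
    | neg _ _ hx => intro r; rw [mul_neg]; exact P.neg_mem (hx r)
    | left_absorb c _ _ hx => intro r; rw [← mul_assoc, mul_assoc a]; exact hx (r * c)
    | right_absorb c _ _ hx => intro r; rw [← mul_assoc]; exact P.mul_mem_right _ c (hx r)
  induction hs using span_induction generalizing t with
  | mem _ h => rw [Set.mem_singleton_iff.mp h]; simpa using haRt t ht 1
  | zero => simp [P.zero_mem]
  | add _ _ _ _ hx hy => rw [add_mul]; exact P.add_mem (hx ht) (hy ht)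
  | neg _ _ hx => rw [neg_mul]; exact P.neg_mem (hx ht)
  | left_absorb c _ _ hx => rw [mul_assoc]; exact P.mul_mem_left c _ (hx ht)
  | right_absorb c _ _ hx => rw [mul_assoc]; exact hx ((span {b}).mul_mem_left c t ht)

theorem mul_mem_of_mem_sup_span_singleton {P : TwoSidedIdeal R} {a b : R}
    (hab : ∀ r, a * r * b ∈ P) {s t : R} (hs : s ∈ P ⊔ span {a})
    (ht : t ∈ P ⊔ span {b}) : s * t ∈ P := by
  obtain ⟨p, hp, s', hs', rfl⟩ := mem_sup.mp hs
  obtain ⟨q, hq, t', ht', rfl⟩ := mem_sup.mp ht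
  rw [add_mul, mul_add s']
  exact P.add_mem (P.mul_mem_right p _ hp)
    (P.add_mem (P.mul_mem_left s' q hq) (mul_mem_of_mem_span_singleton hab hs' ht'))

theorem isPrimeIdeal_of_maximal_disjoint {S : Submonoid R} {P : TwoSidedIdeal R}
    (hP : Maximal (fun I : TwoSidedIdeal R => Disjoint (S : Set R) I) P) : P.IsPrimeIdeal := by
  refine ⟨fun h => Set.disjoint_left.mp hP.1 S.one_mem (h ▸ trivial), fun a b hab => ?_⟩
  have hmeet : ∀ c ∉ P, ∃ s ∈ S, s ∈ P ⊔ span {c} := fun c hc => by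
    have hlt : P < P ⊔ span {c} :=
      left_lt_sup.mpr fun h => hc (span_le.mp h (Set.mem_singleton c))
    simpa [Set.not_disjoint_iff] using hP.not_prop_of_gt hlt
  by_contra! ⟨ha, hb⟩
  obtain ⟨s, hsS, hs⟩ := hmeet a ha
  obtain ⟨t, htS, ht⟩ := hmeet b hb
  exact Set.disjoint_left.mp hP.1 (S.mul_mem hsS htS) (mul_mem_of_mem_sup_span_singleton hab hs ht)

end TwoSidedIdeal

theorem primeRadical_subset_setOf_isNilpotent (R : Type*) [Ring R] :
    primeRadical R ⊆ {a : R | IsNilpotent a} := by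
  intro x hx
  by_contra hnil
  have hbot : Disjoint (Submonoid.powers x : Set R) (⊥ : TwoSidedIdeal R) := by
    rw [TwoSidedIdeal.coe_bot, Set.disjoint_singleton_right]
    rintro ⟨n, hn⟩
    exact hnil ⟨n, hn⟩
  obtain ⟨M, -, hM⟩ := TwoSidedIdeal.exists_le_maximal_disjoint _ hbot
  exact Set.disjoint_left.mp hM.1 (Submonoid.mem_powers x)
    (hx M (TwoSidedIdeal.isPrimeIdeal_of_maximal_disjoint hM))

theorem stmt_7 (R : Type*) [Ring R] (hcr : IsCentralReduced R) :
    {a : R | IsNilpotent a} = primeRadical R := by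
  refine subset_antisymm (fun x ⟨n, hn⟩ P hP => ?_) (primeRadical_subset_setOf_isNilpotent R)
  exact hP.mem_of_pow_mem (hcr x ⟨n, hn⟩) (hn ▸ P.zero_mem)
end

section
/- Every central reduced ring is abelian: every idempotent is central. -/
namespace IsIdempotentElem

variable {R : Type*} [Ring R] {e : R}

lemma isNilpotent_mul_mul_one_sub (he : IsIdempotentElem e) (r : R) :
    IsNilpotent (e * r * (1 - e)) :=
  ⟨2, by rw [sq, mul_assoc, ← mul_assoc (1 - e), ← mul_assoc (1 - e), he.one_sub_mul_self,
    zero_mul, zero_mul, mul_zero]⟩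

lemma mul_mul_one_sub_eq_zero_of_commute (he : IsIdempotentElem e) {r : R}
    (h : Commute e (e * r * (1 - e))) : e * r * (1 - e) = 0 :=
  calc e * r * (1 - e) = e * (e * r * (1 - e)) := by rw [← mul_assoc, ← mul_assoc, he.eq]
    _ = e * r * (1 - e) * e := h.eq
    _ = 0 := by rw [mul_assoc, he.one_sub_mul_self, mul_zero]

end IsIdempotentElem

lemma IsCentralReduced.mul_mul_one_sub_eq_zero {R : Type*} [Ring R] (hcr : IsCentralReduced R)
    {e : R} (he : IsIdempotentElem e) (r : R) : e * r * (1 - e) = 0 :=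
  he.mul_mul_one_sub_eq_zero_of_commute <|
    Semigroup.mem_center_iff.mp (hcr _ (he.isNilpotent_mul_mul_one_sub r)) e

theorem stmt_10 (R : Type*) [Ring R] (hcr : IsCentralReduced R) :
    ∀ e : R, IsIdempotentElem e → e ∈ Set.center R := by
  intro e he
  refine Semigroup.mem_center_iff.mpr fun r => ?_
  have left : e * r = e * r * e := by
    simpa only [mul_one_sub, sub_eq_zero] using hcr.mul_mul_one_sub_eq_zero he r
  have right : r * e = e * r * e := by
    simpa only [sub_sub_cancel, one_sub_mul, sub_mul, one_mul, sub_eq_zero] using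
      hcr.mul_mul_one_sub_eq_zero he.one_sub r
  exact right.trans left.symm
end

section
/- If R is central reduced, then R is directly finite: ab = 1 implies ba = 1 for a, b ∈ R. -/
section

variable {R : Type*} [Ring R] {a b : R}

theorem one_sub_mul_mul_eq_zero_of_mul_eq_one (h : a * b = 1) : (1 - b * a) * b = 0 := by
  rw [sub_mul, one_mul, mul_assoc, h, mul_one, sub_self]

theorem isIdempotentElem_one_sub_mul_of_mul_eq_one (h : a * b = 1) :
    IsIdempotentElem (1 - b * a) := by
  refine IsIdempotentElem.one_sub ?_
  rw [IsIdempotentElem, mul_assoc, ← mul_assoc a, h, one_mul]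

theorem mul_one_sub_mul_sq_eq_zero_of_mul_eq_one (h : a * b = 1) :
    (b * (1 - b * a)) ^ 2 = 0 := by
  rw [sq, mul_assoc, ← mul_assoc _ b, one_sub_mul_mul_eq_zero_of_mul_eq_one h, zero_mul, mul_zero]

theorem mul_eq_one_comm_of_commute (h : a * b = 1) (hc : Commute a (b * (1 - b * a))) :
    b * a = 1 := by
  set e := 1 - b * a
  have hea : e = b * e * a :=
    calc e = a * (b * e) := by rw [← mul_assoc, h, one_mul]
      _ = b * e * a := hc.eq
  have he0 : e = 0 :=
    calc e = e * e := (isIdempotentElem_one_sub_mul_of_mul_eq_one h).symm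
      _ = e * b * (e * a) := by rw [mul_assoc, ← mul_assoc b, ← hea]
      _ = 0 := by rw [one_sub_mul_mul_eq_zero_of_mul_eq_one h, zero_mul]
  exact (sub_eq_zero.mp he0).symm

end

theorem stmt_11 (R : Type*) [Ring R] (hcr : IsCentralReduced R) :
    ∀ a b : R, a * b = 1 → b * a = 1 := by
  intro a b h
  have hcentral := hcr _ ⟨2, mul_one_sub_mul_sq_eq_zero_of_mul_eq_one h⟩
  exact mul_eq_one_comm_of_commute h ((Set.mem_center_iff.mp hcentral).comm a).symm
end

section
/- Let R be a central reduced ring that is nil clean. Then R is commutative. -/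
namespace IsIdempotentElem

variable {R : Type*} [Ring R] {e : R}

lemma mul_mul_one_sub_sq (he : IsIdempotentElem e) (x : R) : (e * x * (1 - e)) ^ 2 = 0 := by
  rw [sq, mul_assoc, ← mul_assoc (1 - e), ← mul_assoc (1 - e), he.one_sub_mul_self]
  simp

lemma one_sub_mul_mul_sq (he : IsIdempotentElem e) (x : R) : ((1 - e) * x * e) ^ 2 = 0 := by
  rw [sq, mul_assoc, ← mul_assoc e, ← mul_assoc e, he.mul_one_sub_self]
  simp

end IsIdempotentElem

namespace IsCentralReduced

variable {R : Type*} [Ring R]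

lemma mem_center_of_isIdempotentElem (hcr : IsCentralReduced R) {e : R}
    (he : IsIdempotentElem e) : e ∈ Set.center R := by
  refine Semigroup.mem_center_iff.mpr fun x => ?_
  have hee : e * e = e := he
  have hupper_comm := Semigroup.mem_center_iff.mp (hcr _ ⟨2, he.mul_mul_one_sub_sq x⟩) e
  have hlower_comm := Semigroup.mem_center_iff.mp (hcr _ ⟨2, he.one_sub_mul_mul_sq x⟩) e
  have hupper : e * x * (1 - e) = 0 := calc
    e * x * (1 - e) = e * (e * x * (1 - e)) := by rw [← mul_assoc, ← mul_assoc, hee]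
    _ = e * x * (1 - e) * e := hupper_comm
    _ = 0 := by rw [mul_assoc, he.one_sub_mul_self, mul_zero]
  have hlower : (1 - e) * x * e = 0 := calc
    (1 - e) * x * e = (1 - e) * x * e * e := by rw [mul_assoc _ e e, hee]
    _ = e * ((1 - e) * x * e) := hlower_comm.symm
    _ = 0 := by rw [← mul_assoc, ← mul_assoc, he.mul_one_sub_self, zero_mul, zero_mul]
  rw [mul_sub, mul_one, sub_eq_zero] at hupper
  rw [sub_mul, sub_mul, one_mul, sub_eq_zero] at hlower
  rw [hlower, ← hupper]

end IsCentralReduced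

theorem stmt_12 (R : Type*) [Ring R] (hcr : IsCentralReduced R)
    (hnc : ∀ a : R, ∃ e b : R, IsIdempotentElem e ∧ IsNilpotent b ∧ a = e + b) :
    ∀ x y : R, x * y = y * x := by
  intro x y
  obtain ⟨e, b, he, hb, rfl⟩ := hnc x
  have hcenter : e + b ∈ Set.center R :=
    Set.add_mem_center (hcr.mem_center_of_isIdempotentElem he) (hcr b hb)
  exact (Semigroup.mem_center_iff.mp hcenter y).symm
end

section
/- A ring R is strongly regular if and only if R is (von Neumann) regular and central reduced. -/
theorem IsReduced.mul_eq_zero_symm_s14 {M₀ : Type*} [MonoidWithZero M₀] [IsReduced M₀] {x y : M₀}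
    (h : x * y = 0) : y * x = 0 :=
  eq_zero_of_pow_eq_zero (n := 2) <| by rw [sq, mul_assoc, ← mul_assoc x, h, zero_mul, mul_zero]

theorem isReduced_of_forall_eq_sq_mul {M₀ : Type*} [MonoidWithZero M₀]
    (h : ∀ a : M₀, ∃ b : M₀, a = a ^ 2 * b) : IsReduced M₀ := by
  refine (isReduced_iff_pow_one_lt 2 one_lt_two).mpr fun x hx => ?_
  obtain ⟨b, hb⟩ := h x
  rw [hb, hx, zero_mul]

theorem IsReduced.isCentralReduced {R : Type*} [Ring R] [IsReduced R] : IsCentralReduced R :=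
  fun _ ha => ha.eq_zero ▸ Set.zero_mem_center

theorem IsCentralReduced.isReduced_s14 {R : Type*} [Ring R] (hcr : IsCentralReduced R)
    (hreg : ∀ a : R, ∃ b : R, a = a * b * a) : IsReduced R := by
  refine (isReduced_iff_pow_one_lt 2 one_lt_two).mpr fun x hx => ?_
  obtain ⟨c, hc⟩ := hreg x
  calc x = x * c * x := hc
    _ = c * x ^ 2 := by rw [(Set.mem_center_iff.mp (hcr x ⟨2, hx⟩)).comm c, sq, mul_assoc]
    _ = 0 := by rw [hx, mul_zero]

theorem IsReduced.eq_sq_mul_iff_eq_mul_mul {R : Type*} [Ring R] [IsReduced R] {a b : R} :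
    a = a ^ 2 * b ↔ a = a * b * a := by
  have hl : a - a ^ 2 * b = a * (1 - a * b) := by noncomm_ring
  have hr : a - a * b * a = (1 - a * b) * a := by noncomm_ring
  rw [← sub_eq_zero, hl, ← sub_eq_zero (a := a), hr]
  exact ⟨IsReduced.mul_eq_zero_symm_s14, IsReduced.mul_eq_zero_symm_s14⟩

theorem stmt_14 (R : Type*) [Ring R] :
    (∀ a : R, ∃ b : R, a = a ^ 2 * b) ↔
      ((∀ a : R, ∃ b : R, a = a * b * a) ∧ IsCentralReduced R) := by
  constructor
  · intro h
    have := isReduced_of_forall_eq_sq_mul h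
    refine ⟨fun a => ?_, IsReduced.isCentralReduced⟩
    obtain ⟨b, hb⟩ := h a
    exact ⟨b, IsReduced.eq_sq_mul_iff_eq_mul_mul.mp hb⟩
  · rintro ⟨hreg, hcr⟩ a
    have := hcr.isReduced_s14 hreg
    obtain ⟨b, hb⟩ := hreg a
    exact ⟨b, IsReduced.eq_sq_mul_iff_eq_mul_mul.mpr hb⟩
end

section
/- A ring R is central reduced if and only if the polynomial ring R[x] is central reduced. -/
open Polynomial

private lemma central_poly {R : Type*} [Ring R] (f : R[X])
    (h : ∀ i, f.coeff i ∈ Set.center R) : f ∈ Set.center R[X] := by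
  rw [Semigroup.mem_center_iff]
  intro q
  induction q using Polynomial.induction_on' with
  | add p r hp hr => rw [add_mul, mul_add, hp, hr]
  | monomial n a =>
    rw [← C_mul_X_pow_eq_monomial, mul_assoc]
    have h1 : X ^ n * f = f * X ^ n := (commute_X_pow f n).eq
    have h2 : C a * f = f * C a := by
      ext k
      rw [coeff_C_mul, coeff_mul_C]
      exact Semigroup.mem_center_iff.mp (h k) a
    rw [h1, ← mul_assoc, h2, mul_assoc]

private lemma coeff_nilpotent {R : Type*} [Ring R] (hR : IsCentralReduced R) :
    ∀ n (f : R[X]), f.natDegree ≤ n → IsNilpotent f → ∀ i, IsNilpotent (f.coeff i) := by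
  intro n
  induction n using Nat.strong_induction_on with
  | _ n ih =>
    intro f hdeg hf i
    by_cases hf0 : f = 0
    · simp [hf0]
    -- leading coefficient is nilpotent
    have hlc : IsNilpotent f.leadingCoeff := by
      obtain ⟨m, hm⟩ := hf
      refine ⟨m, ?_⟩
      have := coeff_pow_mul_natDegree f m
      rw [hm, coeff_zero] at this
      exact this.symm
    have hlcc : f.leadingCoeff ∈ Set.center R := hR _ hlc
    -- the monomial part is nilpotent and central
    set g : R[X] := C f.leadingCoeff * X ^ f.natDegree with hg
    have hgnil : IsNilpotent g := by
      obtain ⟨m, hm⟩ := hlc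
      refine ⟨m, ?_⟩
      rw [hg, ((commute_X_pow (C f.leadingCoeff) f.natDegree).symm).mul_pow,
        ← C_pow, hm, map_zero, zero_mul]
    have hgc : g ∈ Set.center R[X] := by
      apply central_poly
      intro j
      rw [hg, coeff_C_mul, coeff_X_pow]
      by_cases hji : j = f.natDegree <;> simp [hji, hlcc, Set.zero_mem_center]
    have herase : f.eraseLead = f - g := by
      rw [hg, eq_sub_iff_add_eq, eraseLead_add_C_mul_X_pow]
    have henil : IsNilpotent f.eraseLead := by
      rw [herase]
      exact Commute.isNilpotent_sub (Semigroup.mem_center_iff.mp hgc f) hf hgnil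
    -- get coefficient i of f
    rcases lt_trichotomy i f.natDegree with hi | hi | hi
    · have hco : f.coeff i = f.eraseLead.coeff i := (eraseLead_coeff_of_ne i (by omega)).symm
      rw [hco]
      rcases f.eraseLead_natDegree_lt_or_eraseLead_eq_zero with hlt | hzero
      · exact ih f.eraseLead.natDegree (lt_of_lt_of_le hlt hdeg) f.eraseLead le_rfl henil i
      · simp [hzero]
    · rw [hi, coeff_natDegree]; exact hlc
    · rw [coeff_eq_zero_of_natDegree_lt hi]; exact IsNilpotent.zero

theorem stmt_16 (R : Type*) [Ring R] :
    IsCentralReduced R ↔ IsCentralReduced (Polynomial R) := by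
  constructor
  · intro hR f hf
    apply central_poly
    intro i
    exact hR _ (coeff_nilpotent hR f.natDegree f le_rfl hf i)
  · intro hP a ha
    have : (C a : R[X]) ∈ Set.center R[X] := hP _ (ha.map C)
    rw [Semigroup.mem_center_iff] at this ⊢
    intro b
    have := this (C b)
    rw [← C_mul, ← C_mul] at this
    exact C_injective this
end

section
/- A ring R is central reduced if and only if the Dorroh extension D(R, ℤ) is central reduced. -/
/-! Since `ℤ` is reduced, a nilpotent element of `D(R, ℤ)` has zero integer part, so the nilpotent
elements of `D(R, ℤ)` are exactly the images of the nilpotent elements of `R`; and an element of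
`R` is central in `R` iff its image is central in `D(R, ℤ)`. -/

namespace Unitization

variable {S A : Type*}

section Semiring

variable [CommSemiring S] [Semiring A] [Module S A] [IsScalarTower S A A] [SMulCommClass S A A]

theorem inr_pow_succ (a : A) (n : ℕ) :
    ((a ^ (n + 1) : A) : Unitization S A) = (a : Unitization S A) ^ (n + 1) := by
  induction n with
  | zero => simp
  | succ n ih => rw [pow_succ, inr_mul, ih, ← pow_succ]

theorem isNilpotent_inr_iff {a : A} : IsNilpotent (a : Unitization S A) ↔ IsNilpotent a := by
  constructor
  · rintro ⟨n, hn⟩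
    refine ⟨n + 1, inr_injective (R := S) ?_⟩
    rw [inr_pow_succ, pow_succ, hn, zero_mul, inr_zero]
  · rintro ⟨n, hn⟩
    refine ⟨n + 1, ?_⟩
    rw [← inr_pow_succ, pow_succ, hn, zero_mul, inr_zero]

end Semiring

section NonUnitalSemiring

variable [CommSemiring S] [NonUnitalSemiring A] [Module S A] [IsScalarTower S A A]
  [SMulCommClass S A A]

theorem inr_mem_center_iff {a : A} :
    (a : Unitization S A) ∈ Set.center (Unitization S A) ↔ a ∈ Set.center A := by
  simp only [Semigroup.mem_center_iff]
  constructor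
  · intro h b
    exact inr_injective (R := S) (by rw [inr_mul, inr_mul, h])
  · intro h x
    ext
    · simp [mul_comm]
    · simp [h x.snd, add_comm]

theorem eq_inr_snd_of_isNilpotent [IsReduced S] {x : Unitization S A} (hx : IsNilpotent x) :
    x = (x.snd : Unitization S A) := by
  have hfst : x.fst = 0 := (hx.map (fstHom S A)).eq_zero
  ext <;> simp [hfst]

end NonUnitalSemiring

theorem isCentralReduced_iff [CommRing S] [IsReduced S] {R : Type*} [Ring R] [Algebra S R] :
    IsCentralReduced (Unitization S R) ↔ IsCentralReduced R := by
  constructor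
  · intro h a ha
    exact inr_mem_center_iff.mp (h _ (isNilpotent_inr_iff.mpr ha))
  · intro h x hx
    have hx_eq := eq_inr_snd_of_isNilpotent hx
    rw [hx_eq] at hx ⊢
    exact inr_mem_center_iff.mpr (h _ (isNilpotent_inr_iff.mp hx))

end Unitization

/-- The Dorroh extension `D(R, ℤ)` is the unitization of `R` over `ℤ`. -/
theorem stmt_17 (R : Type*) [Ring R] :
    IsCentralReduced R ↔ IsCentralReduced (Unitization ℤ R) :=
  Unitization.isCentralReduced_iff.symm
end

section
/- For a ring R, the trivial extension T(R,R) is central reduced if and only if R is commutative. -/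
/-!
Every `inr m` squares to zero, so in a central reduced `T(R, R)` each `inr x` commutes with
each `inl y`; reading off the second component gives `y * x = x * y`. Conversely, if `R` is
commutative then so is `T(R, R)`, and every element is central.
-/

namespace TrivSqZeroExt

theorem commute_inl_inr_iff {R M : Type*} [MonoidWithZero R] [AddMonoid M]
    [DistribMulAction R M] [DistribMulAction Rᵐᵒᵖ M] (r : R) (m : M) :
    Commute (inl r : TrivSqZeroExt R M) (inr m) ↔ r • m = MulOpposite.op r • m := by
  rw [Commute, SemiconjBy, inl_mul_inr, inr_mul_inl, inr_injective.eq_iff]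

theorem mul_comm_of_forall_mul_comm {R : Type*} [Semiring R] (hR : ∀ x y : R, x * y = y * x)
    (a b : TrivSqZeroExt R R) : a * b = b * a := by
  ext
  · simp only [fst_mul, hR]
  · simp only [snd_mul, smul_eq_mul, MulOpposite.smul_eq_mul_unop, MulOpposite.unop_op, hR]
    exact add_comm _ _

end TrivSqZeroExt

open TrivSqZeroExt in
theorem stmt_18 (R : Type*) [Ring R] :
    IsCentralReduced (TrivSqZeroExt R R) ↔ ∀ x y : R, x * y = y * x := by
  constructor
  · intro h x y
    have hcomm : Commute (inl y : TrivSqZeroExt R R) (inr x) :=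
      Semigroup.mem_center_iff.1 (h _ (isNilpotent_inr x)) (inl y)
    rw [commute_inl_inr_iff, smul_eq_mul, op_smul_eq_mul] at hcomm
    exact hcomm.symm
  · exact fun hR a _ => Semigroup.mem_center_iff.2 fun b => mul_comm_of_forall_mul_comm hR b a
end
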